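/- Let S be a nonempty finite type, let P, Q : S → S → ℝ be row-stochastic matrices, let r : S → ℝ with 0 ≤ r s ≤ 1 for all s, and let γ ∈ ℝ with 0 ≤ γ < 1. Suppose ε ≥ 0 and for every s, ∑_{s'} |P s s' − Q s s'| ≤ ε. Then for every initial state s₀, the series ∑_{t=0}^∞ γ^t · ∑_{s} r s · ((P^t) s₀ s − (Q^t) s₀ s) converges absolutely and its absolute value is at most (6γ/(1−γ)^4)·ε. -/

import Mathlib

/-!
Measure the rows of a matrix in `ℓ¹`, i.e. use the `ℓ∞` operator norm, for which stochastic
matrices are contractions. Telescoping `Pᵗ⁺¹ - Qᵗ⁺¹ = P (Pᵗ - Qᵗ) + (P - Q) Qᵗ` then gives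
`‖Pᵗ - Qᵗ‖ ≤ t ε`, so the `t`-th term of the series is at most `t γᵗ ε`, and
`∑ₜ t γᵗ = γ / (1 - γ)² ≤ 6 γ / (1 - γ)⁴`.
-/

section NormedRing

variable {R : Type*} [SeminormedRing R]

theorem norm_mul_pow_le_of_norm_le_one (x : R) {b : R} (hb : ‖b‖ ≤ 1) (n : ℕ) :
    ‖x * b ^ n‖ ≤ ‖x‖ := by
  induction n with
  | zero => simp
  | succ n ih =>
    calc ‖x * b ^ (n + 1)‖ = ‖x * b ^ n * b‖ := by rw [pow_succ, mul_assoc]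
      _ ≤ ‖x * b ^ n‖ * ‖b‖ := norm_mul_le _ _
      _ ≤ ‖x‖ * 1 := mul_le_mul ih hb (norm_nonneg _) (norm_nonneg _)
      _ = ‖x‖ := mul_one _

theorem norm_pow_sub_pow_le_of_norm_le_one {a b : R} (ha : ‖a‖ ≤ 1) (hb : ‖b‖ ≤ 1) (n : ℕ) :
    ‖a ^ n - b ^ n‖ ≤ n * ‖a - b‖ := by
  induction n with
  | zero => simp
  | succ n ih =>
    have htelescope : a ^ (n + 1) - b ^ (n + 1) = a * (a ^ n - b ^ n) + (a - b) * b ^ n := by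
      simp only [pow_succ', mul_sub, sub_mul]
      abel
    calc ‖a ^ (n + 1) - b ^ (n + 1)‖
        ≤ ‖a‖ * ‖a ^ n - b ^ n‖ + ‖(a - b) * b ^ n‖ := by
          rw [htelescope]
          exact (norm_add_le _ _).trans (add_le_add_left (norm_mul_le _ _) _)
      _ ≤ 1 * (n * ‖a - b‖) + ‖a - b‖ :=
          add_le_add (mul_le_mul ha ih (norm_nonneg _) zero_le_one)
            (norm_mul_pow_le_of_norm_le_one _ hb n)
      _ = (n + 1 : ℕ) * ‖a - b‖ := by push_cast; ring

end NormedRing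

namespace Matrix

attribute [local instance] Matrix.linftyOpNormedAddCommGroup Matrix.linftyOpNormedRing

variable {m n : Type*} [Fintype m] [Fintype n]

theorem linfty_opNorm_le_of_forall_sum_norm_le {A : Matrix m n ℝ} {ε : ℝ} (hε : 0 ≤ ε)
    (h : ∀ i, ∑ j, ‖A i j‖ ≤ ε) : ‖A‖ ≤ ε := by
  rw [linfty_opNorm_def]
  lift ε to NNReal using hε
  exact_mod_cast Finset.sup_le fun i _ => by simpa [← NNReal.coe_le_coe] using h i

theorem linfty_opNorm_le_one_of_mem_rowStochastic [DecidableEq n] {M : Matrix n n ℝ}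
    (hM : M ∈ rowStochastic ℝ n) : ‖M‖ ≤ 1 :=
  linfty_opNorm_le_of_forall_sum_norm_le zero_le_one fun i => by
    simp_rw [Real.norm_eq_abs, abs_of_nonneg (nonneg_of_mem_rowStochastic hM)]
    exact (sum_row_of_mem_rowStochastic hM i).le

theorem abs_mulVec_apply_le_linfty_opNorm (A : Matrix m n ℝ) {v : n → ℝ} (hv : ∀ j, |v j| ≤ 1)
    (i : m) : |(A *ᵥ v) i| ≤ ‖A‖ := by
  have hv' : ‖v‖ ≤ 1 := (pi_norm_le_iff_of_nonneg zero_le_one).2 hv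
  calc |(A *ᵥ v) i| ≤ ‖A *ᵥ v‖ := norm_le_pi_norm (A *ᵥ v) i
    _ ≤ ‖A‖ * ‖v‖ := linfty_opNorm_mulVec A v
    _ ≤ ‖A‖ := mul_le_of_le_one_right (norm_nonneg _) hv'

theorem abs_pow_sub_pow_mulVec_apply_le [DecidableEq n] {P Q : Matrix n n ℝ}
    (hP : P ∈ rowStochastic ℝ n) (hQ : Q ∈ rowStochastic ℝ n) {ε : ℝ} (hε : 0 ≤ ε)
    (h : ∀ i, ∑ j, |P i j - Q i j| ≤ ε) {v : n → ℝ} (hv : ∀ j, |v j| ≤ 1) (t : ℕ) (i : n) :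
    |((P ^ t - Q ^ t) *ᵥ v) i| ≤ t * ε :=
  calc |((P ^ t - Q ^ t) *ᵥ v) i| ≤ ‖P ^ t - Q ^ t‖ := abs_mulVec_apply_le_linfty_opNorm _ hv i
    _ ≤ t * ‖P - Q‖ := norm_pow_sub_pow_le_of_norm_le_one
        (linfty_opNorm_le_one_of_mem_rowStochastic hP)
        (linfty_opNorm_le_one_of_mem_rowStochastic hQ) t
    _ ≤ t * ε := by
        gcongr
        exact linfty_opNorm_le_of_forall_sum_norm_le hε h

end Matrix

theorem summable_abs_and_abs_tsum_le_of_abs_le_mul_geometric {f : ℕ → ℝ} {γ C : ℝ}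
    (hγ0 : 0 ≤ γ) (hγ1 : γ < 1) (hf : ∀ t, |f t| ≤ t * γ ^ t * C) :
    Summable (fun t => |f t|) ∧ |∑' t, f t| ≤ γ / (1 - γ) ^ 2 * C := by
  have hγ : ‖γ‖ < 1 := by rwa [Real.norm_of_nonneg hγ0]
  have hmajorant : Summable (fun t : ℕ => t * γ ^ t * C) :=
    (by simpa using summable_pow_mul_geometric_of_norm_lt_one 1 hγ : Summable _).mul_right C
  have hsum : Summable (fun t => |f t|) :=
    hmajorant.of_nonneg_of_le (fun t => abs_nonneg _) hf
  refine ⟨hsum, ?_⟩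
  calc |∑' t, f t| ≤ ∑' t, |f t| := by
        simpa only [Real.norm_eq_abs] using norm_tsum_le_tsum_norm (f := f) hsum
    _ ≤ ∑' t : ℕ, t * γ ^ t * C := hsum.tsum_le_tsum hf hmajorant
    _ = γ / (1 - γ) ^ 2 * C := by
        rw [tsum_mul_right, tsum_coe_mul_geometric_of_norm_lt_one hγ]

theorem value_difference_bound_general {S : Type*} [Fintype S] [DecidableEq S]
    (P Q : Matrix S S ℝ)
    (hP0 : ∀ s s', 0 ≤ P s s') (hQ0 : ∀ s s', 0 ≤ Q s s')
    (hP1 : ∀ s, ∑ s', P s s' = 1) (hQ1 : ∀ s, ∑ s', Q s s' = 1)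
    (r : S → ℝ) (hr : ∀ s, 0 ≤ r s ∧ r s ≤ 1)
    (γ : ℝ) (hγ0 : 0 ≤ γ) (hγ1 : γ < 1)
    (ε : ℝ) (hε : 0 ≤ ε)
    (h : ∀ s, ∑ s', |P s s' - Q s s'| ≤ ε) :
    ∀ s₀ : S,
      Summable (fun t : ℕ => |γ ^ t * ∑ s, r s * ((P ^ t) s₀ s - (Q ^ t) s₀ s)|) ∧
      |∑' t : ℕ, γ ^ t * ∑ s, r s * ((P ^ t) s₀ s - (Q ^ t) s₀ s)| ≤
        6 * γ / (1 - γ) ^ 4 * ε := by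
  intro s₀
  have hPQ := Matrix.abs_pow_sub_pow_mulVec_apply_le
    (Matrix.mem_rowStochastic_iff_sum.2 ⟨hP0, hP1⟩) (Matrix.mem_rowStochastic_iff_sum.2 ⟨hQ0, hQ1⟩)
    hε h (v := r) (fun s => abs_le.2 ⟨by linarith [(hr s).1], (hr s).2⟩)
  have hterm : ∀ t : ℕ, |γ ^ t * ∑ s, r s * ((P ^ t) s₀ s - (Q ^ t) s₀ s)| ≤ t * γ ^ t * ε := by
    intro t
    have hval : ∑ s, r s * ((P ^ t) s₀ s - (Q ^ t) s₀ s) = (P ^ t - Q ^ t).mulVec r s₀ := by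
      simp only [Matrix.mulVec, dotProduct, Matrix.sub_apply, mul_comm]
    calc |γ ^ t * ∑ s, r s * ((P ^ t) s₀ s - (Q ^ t) s₀ s)|
        = γ ^ t * |(P ^ t - Q ^ t).mulVec r s₀| := by
          rw [hval, abs_mul, abs_of_nonneg (pow_nonneg hγ0 t)]
      _ ≤ γ ^ t * (t * ε) := by
          gcongr
          exact hPQ t s₀
      _ = t * γ ^ t * ε := by ring
  obtain ⟨hsum, hbound⟩ := summable_abs_and_abs_tsum_le_of_abs_le_mul_geometric hγ0 hγ1 hterm
  have hconst : γ / (1 - γ) ^ 2 ≤ 6 * γ / (1 - γ) ^ 4 := by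
    have h1γ : 0 < 1 - γ := by linarith
    have hsq : (1 - γ) ^ 2 ≤ 1 := pow_le_one₀ h1γ.le (by linarith)
    rw [div_le_div_iff₀ (by positivity) (by positivity)]
    nlinarith [mul_nonneg hγ0 (pow_nonneg h1γ.le 2)]
  exact ⟨hsum, hbound.trans (mul_le_mul_of_nonneg_right hconst hε)⟩

theorem value_difference_bound {S : Type*} [Fintype S] [Nonempty S] [DecidableEq S]
    (P Q : Matrix S S ℝ)
    (hP0 : ∀ s s', 0 ≤ P s s') (hQ0 : ∀ s s', 0 ≤ Q s s')
    (hP1 : ∀ s, ∑ s', P s s' = 1) (hQ1 : ∀ s, ∑ s', Q s s' = 1)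
    (r : S → ℝ) (hr : ∀ s, 0 ≤ r s ∧ r s ≤ 1)
    (γ : ℝ) (hγ0 : 0 ≤ γ) (hγ1 : γ < 1)
    (ε : ℝ) (hε : 0 ≤ ε)
    (h : ∀ s, ∑ s', |P s s' - Q s s'| ≤ ε) :
    ∀ s₀ : S,
      Summable (fun t : ℕ => |γ ^ t * ∑ s, r s * ((P ^ t) s₀ s - (Q ^ t) s₀ s)|) ∧
      |∑' t : ℕ, γ ^ t * ∑ s, r s * ((P ^ t) s₀ s - (Q ^ t) s₀ s)| ≤
        6 * γ / (1 - γ) ^ 4 * ε :=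
  value_difference_bound_general P Q hP0 hQ0 hP1 hQ1 r hr γ hγ0 hγ1 ε hε h
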